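/- arXiv:2111.05099 — 3 statements merged into one kernel-verified Lean document; each statement's English description precedes it below -/
import Mathlib

section
/- Let B and C be locally small categories with a pre-adjunction F : Ob(B) ⇄ Ob(C) : H witnessed by maps Φ_{X,Y} : hom_C(F(X), Y) → hom_B(X, H(Y)). If t, k ≥ 2, A, B ∈ Ob(B), C ∈ Ob(C), and C → (F(B))^{F(A)}_{k,t} holds in C, then H(C) → (B)^{A}_{k,t} holds in B. -/
open CategoryTheory

universe u v u' v'

/-- `ArrowRel k t A B X` is the Ramsey partition relation `X ⟶ (B)^A_{k,t}`:
every `k`-coloring of `hom(A, X)` admits `w ∈ hom(B, X)` such that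
`w ∘ hom(A, B)` receives at most `t` colors. -/
def ArrowRel {C : Type u} [Category.{v} C] (k t : ℕ) (A B X : C) : Prop :=
  ∀ χ : (A ⟶ X) → Fin k, ∃ w : B ⟶ X,
    (χ '' Set.range (fun f : A ⟶ B => f ≫ w)).ncard ≤ t

/-- Pre-adjunctions transport the Ramsey partition relation: if
`F : Ob(B) ⇄ Ob(C) : H` is a pre-adjunction and `C ⟶ (F B₀)^{F A₀}_{k,t}` in
`C`, then `H C ⟶ (B₀)^{A₀}_{k,t}` in `B`. -/
theorem stmt_9 {B : Type u} [Category.{v} B] {C : Type u'} [Category.{v'} C]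
    (F : B → C) (H : C → B)
    (Φ : ∀ (X : B) (Y : C), (F X ⟶ Y) → (X ⟶ H Y))
    (hΦ : ∀ (Y : C) (A₀ B₀ : B) (u : F B₀ ⟶ Y) (f : A₀ ⟶ B₀),
      ∃ v : F A₀ ⟶ F B₀, f ≫ Φ B₀ Y u = Φ A₀ Y (v ≫ u))
    (k t : ℕ) (hk : 2 ≤ k) (ht : 2 ≤ t)
    (A₀ B₀ : B) (Y : C)
    (hRamsey : ArrowRel k t (F A₀) (F B₀) Y) :
    ArrowRel k t A₀ B₀ (H Y) := by
  intro χ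
  obtain ⟨w, hw⟩ := hRamsey (fun g => χ (Φ A₀ Y g))
  refine ⟨Φ B₀ Y w, le_trans (Set.ncard_le_ncard ?_ (Set.toFinite _)) hw⟩
  rintro c ⟨-, ⟨f, rfl⟩, rfl⟩
  obtain ⟨v, hv⟩ := hΦ Y A₀ B₀ w f
  exact ⟨v ≫ w, ⟨v, rfl⟩, by simp [hv]⟩
end

section
/- Let M be a monoid (finite or infinite). The cofree M-set E(ω) on countably many generators is universal for finite ordered M-sets in the following sense: for every finite ordered M-set ((B, <), β) regarded as a weak Eilenberg–Moore coalgebra and every order embedding f : (B, <) → ω, the map Ê(f) ∘ β (i.e., b ↦ f ∘ β(b)) is an injective coalgebra homomorphism from ((B,<),β) to the cofree coalgebra (Ê(ω), δ_ω). -/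
universe u v

/-- `LexLT r f g` : at the least index where `f` and `g` differ, `r` holds. -/
def LexLT {S : Type u} [LinearOrder S] {X : Type v} (r : X → X → Prop)
    (f g : S → X) : Prop :=
  ∃ v : S, (∀ w : S, w < v → f w = g w) ∧ r (f v) (g v)

/-- Universality of the ordered cofree `M`-set `Ê(ω) = (ℕ^M, <_lex)`: for every
finite ordered `M`-set `((B, <), β)`, viewed as a weak Eilenberg–Moore
coalgebra, and every order embedding `f : B → ℕ = ω`, the map
`Ê(f) ∘ β : b ↦ f ∘ β b` is an injective coalgebra homomorphism, i.e. an order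
embedding `g` into the lexicographic order satisfying `δ_ω ∘ g = Ê(g) ∘ β`. -/
theorem stmt_18 {M : Type u} [Monoid M] [LinearOrder M] [WellFoundedLT M]
    (hone : ∀ m : M, 1 ≤ m)
    {B : Type v} [Fintype B] [LinearOrder B]
    (β : B → (M → B))
    (hβcoalg : ∀ (b : B) (v w : M), β b (w * v) = β (β b v) w)
    (hβmono : ∀ b₁ b₂ : B, b₁ < b₂ → LexLT (· < ·) (β b₁) (β b₂))
    (f : B → ℕ) (hf : StrictMono f) :
    (∀ b₁ b₂ : B, b₁ < b₂ → LexLT (· < ·) (f ∘ β b₁) (f ∘ β b₂)) ∧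
      Function.Injective (fun b => f ∘ β b) ∧
      (∀ (b : B) (v w : M), (f ∘ β b) (w * v) = (f ∘ β (β b v)) w) := by
  have mono : ∀ b₁ b₂ : B, b₁ < b₂ → LexLT (· < ·) (f ∘ β b₁) (f ∘ β b₂) := by
    intro b₁ b₂ h
    obtain ⟨v, hv, hlt⟩ := hβmono b₁ b₂ h
    exact ⟨v, fun w hw => congrArg f (hv w hw), hf hlt⟩
  refine ⟨mono, ?_, fun b v w => congrArg f (hβcoalg b v w)⟩
  intro b₁ b₂ h
  by_contra hne
  rcases lt_or_gt_of_ne hne with hlt | hlt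
  · obtain ⟨v, -, hv⟩ := mono b₁ b₂ hlt
    exact absurd (congrFun h v) (ne_of_lt hv)
  · obtain ⟨v, -, hv⟩ := mono b₂ b₁ hlt
    exact absurd (congrFun h v) (ne_of_gt hv)
end

section
/- Let M be a monoid and let R be the set of embeddings of a fixed finite ordered M-set A = {a₁ < ⋯ < a_s} (as a coalgebra) into the ordered cofree M-set Ê(ω). The map π sending an embedding f ∈ R to the pair consisting of (i) the subset A_ℓ ⊆ A of elements a_{j} that are <-minimal in their equivalence class under the relation (a_i, a_j) ∈ ρ iff f(a_i)(1) = f(a_j)(1), and (ii) the induced order embedding f* : A_ℓ → ω given by f*(a) = f(a)(1), is injective. -/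
universe u v

/-- `f` is an embedding of the finite ordered `M`-set `(A, α', <)` into the
ordered cofree `M`-set `Ê(ω) = (ℕ^M, <_lex)`: an `M`-set morphism which is an
order embedding into the lexicographic order. -/
def IsOrdEmbIntoCofree {M : Type u} [Monoid M] [LinearOrder M]
    {A : Type v} [LinearOrder A] (α' : M → A → A) (f : A → (M → ℕ)) : Prop :=
  (∀ (m : M) (a : A), f (α' m a) = fun w => f a (m * w)) ∧
    ∀ a b : A, a < b → LexLT (· < ·) (f a) (f b)

/-- The set of elements of `A` that are minimal in their class for the
equivalence `(a, b) ∈ ρ ⇔ f a 1 = f b 1`. -/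
def minimalSet {M : Type u} [Monoid M] {A : Type v} [LinearOrder A]
    (f : A → (M → ℕ)) : Set A :=
  {a : A | ∀ b : A, b < a → f b 1 ≠ f a 1}

/-- The map `π` sending an embedding `f` of a finite ordered `M`-set into the
ordered cofree `M`-set `Ê(ω)` to the pair consisting of the set `A_ℓ` of
`ρ`-minimal elements and the induced order embedding `f* : A_ℓ → ω`,
`f* a = f a 1`, is injective: two embeddings with the same minimal set and the
same values `f a 1` on it coincide. -/
theorem stmt_19 {M : Type u} [Monoid M] [LinearOrder M] [WellFoundedLT M]
    (hone : ∀ m : M, 1 ≤ m)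
    {A : Type v} [Fintype A] [LinearOrder A]
    (α' : M → A → A)
    (hα1 : ∀ a, α' 1 a = a)
    (hαmul : ∀ (m₁ m₂ : M) (a : A), α' m₁ (α' m₂ a) = α' (m₂ * m₁) a)
    (f g : A → (M → ℕ))
    (hfR : IsOrdEmbIntoCofree α' f) (hgR : IsOrdEmbIntoCofree α' g)
    (hset : minimalSet (M := M) f = minimalSet (M := M) g)
    (hval : ∀ a ∈ minimalSet (M := M) f, f a 1 = g a 1) :
    f = g := by
  obtain ⟨hfM, hfO⟩ := hfR
  obtain ⟨hgM, hgO⟩ := hgR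
  have mono : ∀ (h : A → M → ℕ), (∀ a b, a < b → LexLT (· < ·) (h a) (h b)) →
      ∀ a b : A, a ≤ b → h a 1 ≤ h b 1 := by
    intro h hO a b hab
    rcases eq_or_lt_of_le hab with rfl | hab
    · exact le_rfl
    obtain ⟨v, hw, hv⟩ := hO a b hab
    rcases eq_or_lt_of_le (hone v) with h1 | h1
    · exact le_of_lt (h1 ▸ hv)
    · exact le_of_eq (hw 1 h1)
  have key : ∀ a : A, f a 1 = g a 1 := by
    intro a
    induction a using WellFoundedLT.induction with
    | ind a ih =>
      by_cases hmin : a ∈ minimalSet (M := M) f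
      · exact hval a hmin
      · have hmin' : a ∉ minimalSet (M := M) g := hset ▸ hmin
        simp only [minimalSet, Set.mem_setOf_eq, not_forall, not_ne_iff] at hmin hmin'
        obtain ⟨b, hb, hfb⟩ := hmin
        obtain ⟨c, hc, hgc⟩ := hmin'
        set s : Finset A := Finset.univ.filter (· < a) with hs
        have hbs : b ∈ s := by simp [hs, hb]
        have hcs : c ∈ s := by simp [hs, hc]
        set p := s.max' ⟨b, hbs⟩ with hp
        have hpa : p < a := by
          have := Finset.mem_filter.mp (s.max'_mem ⟨b, hbs⟩)
          exact this.2
        have hbp : b ≤ p := s.le_max' b hbs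
        have hcp : c ≤ p := s.le_max' c hcs
        have hfp : f p 1 = f a 1 :=
          le_antisymm (mono f hfO p a hpa.le)
            (hfb ▸ mono f hfO b p hbp)
        have hgp : g p 1 = g a 1 :=
          le_antisymm (mono g hgO p a hpa.le)
            (hgc ▸ mono g hgO c p hcp)
        rw [← hfp, ← hgp, ih p hpa]
  funext a m
  have h1 : f a m = f (α' m a) 1 := by rw [hfM]; simp
  have h2 : g a m = g (α' m a) 1 := by rw [hgM]; simp
  rw [h1, h2, key]
end
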